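/- Let I ⊆ ℝ be an interval, t₀ ∈ I, P ∈ C¹(I, ℝ) and Q ∈ C¹(I × ℝ, ℝ). Then the following are equivalent: (1) there exists a differentiable function r̂ : I → [0, ∞) with r̂(t₀) = 0, r̂(t) > 0 for all t ∈ I \ {t₀}, and r̂′(t) = P(t)·r̂(t)^(1/2) + Q(t, r̂(t))·r̂(t) for all t ∈ I; (2) there exists a differentiable function u : I → [0, ∞) with u(t₀) = 0, u(t) > 0 for all t ∈ I \ {t₀}, and u′(t) = (1/2)·P(t) + (1/2)·Q(t, u(t)²)·u(t) for all t ∈ I. Moreover, when such a function u exists it is unique, and hence r̂ = u² is the unique function satisfying (1). -/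

import Mathlib

/-!
Where `r̂ > 0` the substitution `u = √r̂` is a smooth change of variables, and the chain rule turns
each equation into the other. At `t₀` the derivative of `√r̂` is recovered from the mean value
theorem: the difference quotients of `u` at `t₀` are values of `(1/2)P + (1/2)Q(·, u²)u` at points
between, which converge by continuity. Uniqueness is the uniqueness half of Picard–Lindelöf: the
right-hand side is `C¹`, hence Lipschitz in `u` on compact rectangles, and every solution vanishes
at `t₀`. Since `r̂ = (√r̂)²`, uniqueness of `u` gives uniqueness of `r̂`.
-/

/-- A function `r̂ : I → [0,∞)` with `r̂(t₀) = 0`, `r̂ > 0` on `I \ {t₀}`, satisfying the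
radial null geodesic equation `r̂' = P(t)·r̂^(1/2) + Q(t, r̂)·r̂` on `I`. -/
def IsRNGSolutionHat (I : Set ℝ) (t₀ : ℝ) (P : ℝ → ℝ) (Q : ℝ → ℝ → ℝ) (r : ℝ → ℝ) : Prop :=
  r t₀ = 0 ∧ (∀ t ∈ I, 0 ≤ r t) ∧ (∀ t ∈ I, t ≠ t₀ → 0 < r t) ∧
  ∀ t ∈ I, HasDerivWithinAt r (P t * (r t) ^ ((1 : ℝ) / 2) + Q t (r t) * r t) I t

/-- A function `u : I → [0,∞)` with `u(t₀) = 0`, `u > 0` on `I \ {t₀}`, satisfying the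
transformed equation `u' = (1/2)·P(t) + (1/2)·Q(t, u²)·u` on `I`. -/
def IsRNGSolutionU (I : Set ℝ) (t₀ : ℝ) (P : ℝ → ℝ) (Q : ℝ → ℝ → ℝ) (u : ℝ → ℝ) : Prop :=
  u t₀ = 0 ∧ (∀ t ∈ I, 0 ≤ u t) ∧ (∀ t ∈ I, t ≠ t₀ → 0 < u t) ∧
  ∀ t ∈ I, HasDerivWithinAt u ((1 / 2) * P t + (1 / 2) * Q t ((u t) ^ 2) * u t) I t

open Set Filter Topology

namespace Set.OrdConnected

variable {I : Set ℝ}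

theorem exists_slope_eq (hI : I.OrdConnected) {f f' : ℝ → ℝ} {x y : ℝ} (hx : x ∈ I) (hy : y ∈ I)
    (hxy : x ≠ y) (hf : ContinuousOn f I) (hf' : ∀ z ∈ uIoo x y, HasDerivWithinAt f (f' z) I z) :
    ∃ c ∈ uIoo x y, slope f x y = f' c := by
  have hsub : uIcc x y ⊆ I := hI.uIcc_subset hx hy
  obtain ⟨c, hc, hslope⟩ := exists_hasDerivAt_eq_slope f f' (inf_lt_sup.2 hxy) (hf.mono hsub)
    fun z hz ↦ (hf' z hz).hasDerivAt <|
      mem_of_superset (Ioo_mem_nhds hz.1 hz.2) (Ioo_subset_Icc_self.trans hsub)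
  refine ⟨c, hc, ?_⟩
  rw [hslope, ← slope_def_field]
  rcases le_total x y with h | h
  · simp [h]
  · simp [h, slope_comm]

theorem hasDerivWithinAt_of_hasDerivWithinAt_of_ne (hI : I.OrdConnected) {f g : ℝ → ℝ} {x : ℝ}
    (hx : x ∈ I) (hf : ContinuousWithinAt f I x)
    (hderiv : ∀ y ∈ I, y ≠ x → HasDerivWithinAt f (g y) I y) (hg : ContinuousWithinAt g I x) : HasDerivWithinAt f (g x) I x := by
  have hcont : ContinuousOn f I := fun y hy ↦ by
    rcases eq_or_ne y x with rfl | hne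
    · exact hf
    · exact (hderiv y hy hne).continuousWithinAt
  have hmvt : ∀ y ∈ I \ {x}, ∃ c ∈ uIoo x y, slope f x y = g c := fun y hy ↦
    hI.exists_slope_eq hx hy.1 (Ne.symm hy.2) hcont fun z hz ↦
      hderiv z (hI.uIcc_subset hx hy.1 (uIoo_subset_uIcc_self hz))
        (ne_of_mem_of_not_mem hz left_notMem_uIoo)
  choose! c hc hslope using hmvt
  have hc_tendsto : Tendsto c (𝓝[I \ {x}] x) (𝓝[I] x) := by
    refine tendsto_nhdsWithin_iff.2 ⟨?_, eventually_mem_nhdsWithin.mono fun y hy ↦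
      hI.uIcc_subset hx hy.1 (uIoo_subset_uIcc_self (hc y hy))⟩
    have hinf : Tendsto (fun y ↦ x ⊓ y) (𝓝 x) (𝓝 (x ⊓ x)) := tendsto_const_nhds.inf_nhds tendsto_id
    have hsup : Tendsto (fun y ↦ x ⊔ y) (𝓝 x) (𝓝 (x ⊔ x)) := tendsto_const_nhds.sup_nhds tendsto_id
    rw [inf_idem] at hinf
    rw [sup_idem] at hsup
    exact tendsto_of_tendsto_of_tendsto_of_le_of_le' (hinf.mono_left nhdsWithin_le_nhds)
      (hsup.mono_left nhdsWithin_le_nhds)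
      (eventually_mem_nhdsWithin.mono fun y hy ↦ (hc y hy).1.le)
      (eventually_mem_nhdsWithin.mono fun y hy ↦ (hc y hy).2.le)
  rw [hasDerivWithinAt_iff_tendsto_slope]
  exact (hg.tendsto.comp hc_tendsto).congr'
    (eventually_mem_nhdsWithin.mono fun y hy ↦ (hslope y hy).symm)

theorem ODE_solution_unique (hI : I.OrdConnected) {E : Type*} [NormedAddCommGroup E]
    [NormedSpace ℝ E] {v : ℝ → E → E}
    (hv : ∀ a b R, Icc a b ⊆ I →
      ∃ K, ∀ t ∈ Icc a b, LipschitzOnWith K (v t) (Metric.closedBall 0 R))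
    {f g : ℝ → E} (hf : ∀ t ∈ I, HasDerivWithinAt f (v t (f t)) I t)
    (hg : ∀ t ∈ I, HasDerivWithinAt g (v t (g t)) I t) {t₀ : ℝ} (ht₀ : t₀ ∈ I)
    (h : f t₀ = g t₀) : EqOn f g I := by
  intro t ht
  have hfc : ContinuousOn f I := fun s hs ↦ (hf s hs).continuousWithinAt
  have hgc : ContinuousOn g I := fun s hs ↦ (hg s hs).continuousWithinAt
  have hsub : uIcc t₀ t ⊆ I := hI.uIcc_subset ht₀ ht
  obtain ⟨R, hR⟩ := ((isCompact_uIcc.image_of_continuousOn (hfc.mono hsub)).union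
    (isCompact_uIcc.image_of_continuousOn (hgc.mono hsub))).isBounded.subset_closedBall 0
  have hfR : ∀ s ∈ uIcc t₀ t, f s ∈ Metric.closedBall 0 R := fun s hs ↦
    hR (Or.inl (mem_image_of_mem f hs))
  have hgR : ∀ s ∈ uIcc t₀ t, g s ∈ Metric.closedBall 0 R := fun s hs ↦
    hR (Or.inr (mem_image_of_mem g hs))
  rcases le_total t₀ t with hle | hle
  · rw [uIcc_of_le hle] at hsub hfR hgR
    obtain ⟨K, hK⟩ := hv t₀ t R hsub
    have hI_nhds : ∀ s ∈ Ico t₀ t, I ∈ 𝓝[≥] s := fun s hs ↦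
      mem_of_superset (Icc_mem_nhdsGE hs.2) ((Icc_subset_Icc_left hs.1).trans hsub)
    exact ODE_solution_unique_of_mem_Icc_right (fun s hs ↦ hK s (Ico_subset_Icc_self hs))
      (hfc.mono hsub)
      (fun s hs ↦ (hf s (hsub (Ico_subset_Icc_self hs))).mono_of_mem_nhdsWithin (hI_nhds s hs))
      (fun s hs ↦ hfR s (Ico_subset_Icc_self hs)) (hgc.mono hsub)
      (fun s hs ↦ (hg s (hsub (Ico_subset_Icc_self hs))).mono_of_mem_nhdsWithin (hI_nhds s hs))
      (fun s hs ↦ hgR s (Ico_subset_Icc_self hs)) h ⟨hle, le_rfl⟩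
  · rw [uIcc_of_ge hle] at hsub hfR hgR
    obtain ⟨K, hK⟩ := hv t t₀ R hsub
    have hI_nhds : ∀ s ∈ Ioc t t₀, I ∈ 𝓝[≤] s := fun s hs ↦
      mem_of_superset (Icc_mem_nhdsLE hs.1) ((Icc_subset_Icc_right hs.2).trans hsub)
    exact ODE_solution_unique_of_mem_Icc_left (fun s hs ↦ hK s (Ioc_subset_Icc_self hs))
      (hfc.mono hsub)
      (fun s hs ↦ (hf s (hsub (Ioc_subset_Icc_self hs))).mono_of_mem_nhdsWithin (hI_nhds s hs))
      (fun s hs ↦ hfR s (Ioc_subset_Icc_self hs)) (hgc.mono hsub)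
      (fun s hs ↦ (hg s (hsub (Ioc_subset_Icc_self hs))).mono_of_mem_nhdsWithin (hI_nhds s hs))
      (fun s hs ↦ hgR s (Ioc_subset_Icc_self hs)) h ⟨le_rfl, hle⟩

end Set.OrdConnected

theorem ContDiffOn.exists_lipschitzOnWith_prodMk_left {E F G : Type*} [NormedAddCommGroup E]
    [NormedSpace ℝ E] [NormedAddCommGroup F] [NormedSpace ℝ F] [NormedAddCommGroup G]
    [NormedSpace ℝ G] {f : E × F → G} {s : Set E} {t : Set F} (hf : ContDiffOn ℝ 1 f (s ×ˢ t))
    (hs : Convex ℝ s) (ht : Convex ℝ t) (hs' : IsCompact s) (ht' : IsCompact t) :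
    ∃ K, ∀ x ∈ s, LipschitzOnWith K (fun y ↦ f (x, y)) t := by
  obtain ⟨K, hK⟩ := hf.exists_lipschitzOnWith one_ne_zero (hs.prod ht) (hs'.prod ht')
  exact ⟨K, fun x hx ↦
    mul_one K ▸ hK.comp (LipschitzWith.prodMk_left x).lipschitzOnWith fun _ hy ↦ ⟨hx, hy⟩⟩

variable {I : Set ℝ} {t₀ : ℝ} {P : ℝ → ℝ} {Q : ℝ → ℝ → ℝ}

theorem IsRNGSolutionU.sq {u : ℝ → ℝ} (hu : IsRNGSolutionU I t₀ P Q u) :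
    IsRNGSolutionHat I t₀ P Q (fun t ↦ u t ^ 2) := by
  obtain ⟨hu₀, hu_nonneg, hu_pos, hu'⟩ := hu
  refine ⟨by simp [hu₀], fun t _ ↦ sq_nonneg _, fun t ht hne ↦ pow_pos (hu_pos t ht hne) 2,
    fun t ht ↦ (hu' t ht).pow 2 |>.congr_deriv ?_⟩
  rw [← Real.sqrt_eq_rpow, Real.sqrt_sq (hu_nonneg t ht)]
  push_cast
  ring

theorem IsRNGSolutionHat.sqrt (hI : I.OrdConnected) (ht₀ : t₀ ∈ I)
    (hP : ContinuousWithinAt P I t₀)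
    (hQ : ContinuousWithinAt (fun p : ℝ × ℝ ↦ Q p.1 p.2) (I ×ˢ univ) (t₀, 0))
    {r : ℝ → ℝ} (hr : IsRNGSolutionHat I t₀ P Q r) :
    IsRNGSolutionU I t₀ P Q (fun t ↦ √(r t)) := by
  obtain ⟨hr₀, hr_nonneg, hr_pos, hr'⟩ := hr
  set u : ℝ → ℝ := fun t ↦ √(r t)
  set g : ℝ → ℝ := fun t ↦ 1 / 2 * P t + 1 / 2 * Q t (u t ^ 2) * u t
  have hu' : ∀ t ∈ I, t ≠ t₀ → HasDerivWithinAt u (g t) I t := fun t ht hne ↦ by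
    have hsqrt_ne : √(r t) ≠ 0 := (Real.sqrt_pos.2 (hr_pos t ht hne)).ne'
    refine (hr' t ht).sqrt (hr_pos t ht hne).ne' |>.congr_deriv ?_
    rw [← Real.sqrt_eq_rpow]
    simp only [g, u, Real.sq_sqrt (hr_nonneg t ht)]
    field_simp
    linear_combination (-Q t (r t)) * Real.mul_self_sqrt (hr_nonneg t ht)
  have hu_cont : ContinuousWithinAt u I t₀ := (hr' t₀ ht₀).continuousWithinAt.sqrt
  have hg : ContinuousWithinAt g I t₀ := by
    have hQu : ContinuousWithinAt (fun t ↦ Q t (u t ^ 2)) I t₀ :=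
      hQ.comp_of_eq (f := fun t ↦ (t, u t ^ 2)) (continuousWithinAt_id.prodMk (hu_cont.pow 2))
        (fun t ht ↦ ⟨ht, trivial⟩) (by simp [u, hr₀])
    exact (continuousWithinAt_const.mul hP).add ((continuousWithinAt_const.mul hQu).mul hu_cont)
  refine ⟨by simp [u, hr₀], fun t _ ↦ Real.sqrt_nonneg _,
    fun t ht hne ↦ Real.sqrt_pos.2 (hr_pos t ht hne), fun t ht ↦ ?_⟩
  rcases eq_or_ne t t₀ with rfl | hne
  · exact hI.hasDerivWithinAt_of_hasDerivWithinAt_of_ne ht hu_cont hu' hg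
  · exact hu' t ht hne

theorem IsRNGSolutionU.eqOn (hI : I.OrdConnected) (ht₀ : t₀ ∈ I)
    (hQ : ContDiffOn ℝ 1 (fun p : ℝ × ℝ ↦ Q p.1 p.2) (I ×ˢ univ)) {u v : ℝ → ℝ}
    (hu : IsRNGSolutionU I t₀ P Q u) (hv : IsRNGSolutionU I t₀ P Q v) : EqOn u v I := by
  refine hI.ODE_solution_unique (v := fun t x ↦ 1 / 2 * P t + 1 / 2 * Q t (x ^ 2) * x)
    (fun a b R hab ↦ ?_) hu.2.2.2 hv.2.2.2 ht₀ (hu.1.trans hv.1.symm)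
  have hG : ContDiffOn ℝ 1 (fun p : ℝ × ℝ ↦ 1 / 2 * Q p.1 (p.2 ^ 2) * p.2)
      (Icc a b ×ˢ Metric.closedBall 0 R) := by
    have hmaps : MapsTo (fun p : ℝ × ℝ ↦ (p.1, p.2 ^ 2)) (Icc a b ×ˢ Metric.closedBall 0 R)
        (I ×ˢ univ) := fun p hp ↦ ⟨hab hp.1, trivial⟩
    have hQ' := hQ.comp (contDiff_fst.prodMk (contDiff_snd.pow 2)).contDiffOn hmaps
    exact (contDiffOn_const.mul hQ').mul contDiffOn_snd
  obtain ⟨K, hK⟩ := hG.exists_lipschitzOnWith_prodMk_left (convex_Icc a b)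
    (convex_closedBall 0 R) isCompact_Icc (isCompact_closedBall 0 R)
  exact ⟨0 + K, fun t ht ↦ (LipschitzWith.const _).lipschitzOnWith.add (hK t ht)⟩

/-- Equivalence of the radial null geodesic equation in the variable
`r̂ = r - r₁(t)` with the transformed equation for `u = r̂^(1/2)`, together with
uniqueness of the solution `u` (and hence of `r̂ = u²`). -/
theorem rng_boundary_substitution (I : Set ℝ) (hIconn : I.OrdConnected)
    (t₀ : ℝ) (ht₀ : t₀ ∈ I)
    (P : ℝ → ℝ) (hP : ContDiffOn ℝ 1 P I)
    (Q : ℝ → ℝ → ℝ)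
    (hQ : ContDiffOn ℝ 1 (fun p : ℝ × ℝ => Q p.1 p.2) (I ×ˢ Set.univ)) :
    ((∃ r, IsRNGSolutionHat I t₀ P Q r) ↔ (∃ u, IsRNGSolutionU I t₀ P Q u)) ∧
    (∀ u v, IsRNGSolutionU I t₀ P Q u → IsRNGSolutionU I t₀ P Q v → Set.EqOn u v I) ∧
    (∀ u, IsRNGSolutionU I t₀ P Q u →
      IsRNGSolutionHat I t₀ P Q (fun t => (u t) ^ 2) ∧
      ∀ r, IsRNGSolutionHat I t₀ P Q r → Set.EqOn r (fun t => (u t) ^ 2) I) := by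
  have hsqrt {r : ℝ → ℝ} (hr : IsRNGSolutionHat I t₀ P Q r) :
      IsRNGSolutionU I t₀ P Q (fun t ↦ √(r t)) :=
    hr.sqrt hIconn ht₀ (hP.continuousOn t₀ ht₀) (hQ.continuousOn _ ⟨ht₀, trivial⟩)
  have huniq (u v : ℝ → ℝ) (hu : IsRNGSolutionU I t₀ P Q u) (hv : IsRNGSolutionU I t₀ P Q v) :
      EqOn u v I :=
    hu.eqOn hIconn ht₀ hQ hv
  refine ⟨⟨fun ⟨r, hr⟩ ↦ ⟨_, hsqrt hr⟩, fun ⟨u, hu⟩ ↦ ⟨_, hu.sq⟩⟩, huniq,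
    fun u hu ↦ ⟨hu.sq, fun r hr t ht ↦ ?_⟩⟩
  show r t = u t ^ 2
  rw [← huniq _ u (hsqrt hr) hu ht, Real.sq_sqrt (hr.2.1 t ht)]
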